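/- arXiv:2208.00724 — 3 statements merged into one kernel-verified Lean document; each statement's English description precedes it below -/
import Mathlib

section
/- Fix 0 < γ < 1 and choose n ∈ ℕ with √n > 1/γ. For any positive integers N_1, ..., N_n with N = Σ N_i and any constant c > 0, defining e(i) = c/√(N_i) for i = 1,...,n and e(0) = c/√N, it holds that Σ_{i=1}^n e(i)/n > e(0)/γ. -/
theorem assumption_one_fails (γ : ℝ) (hγ0 : 0 < γ) (hγ1 : γ < 1)
    (n : ℕ) (hn : Real.sqrt n > 1 / γ)
    (N : Fin n → ℕ) (hN : ∀ i, 0 < N i) (c : ℝ) (hc : 0 < c) :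
    ∑ i, (c / Real.sqrt (N i)) / (n : ℝ) >
      (c / Real.sqrt ((∑ i, N i : ℕ) : ℝ)) / γ := by
  have hγinv : 0 < 1 / γ := by positivity
  have hn0 : 0 < n := by
    rcases Nat.eq_zero_or_pos n with h | h
    · exfalso; rw [h] at hn; simp at hn; linarith
    · exact h
  have hnR : (0:ℝ) < n := by exact_mod_cast hn0
  set S : ℕ := ∑ i, N i with hSdef
  have hS0 : 0 < S := by
    have : (0:ℕ) < ∑ i, N i := Finset.sum_pos (fun i _ => hN i) ⟨⟨0, hn0⟩, Finset.mem_univ _⟩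
    exact this
  have hSR : (0:ℝ) < S := by exact_mod_cast hS0
  have hsqS : 0 < Real.sqrt S := Real.sqrt_pos.mpr hSR
  have hsqn : 0 < Real.sqrt n := Real.sqrt_pos.mpr hnR
  set T : ℝ := ∑ i, 1 / Real.sqrt (N i) with hTdef
  set A : ℝ := ∑ i, Real.sqrt (N i) with hAdef
  have hNiR : ∀ i, (0:ℝ) < Real.sqrt (N i) := fun i =>
    Real.sqrt_pos.mpr (by exact_mod_cast hN i)
  have hT0 : 0 ≤ T := Finset.sum_nonneg fun i _ => by positivity
  have hA0 : 0 ≤ A := Finset.sum_nonneg fun i _ => Real.sqrt_nonneg _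
  -- Cauchy–Schwarz 1 : n² ≤ A * T
  have cs1 : (n:ℝ)^2 ≤ A * T := by
    have h2 := Finset.sum_mul_sq_le_sq_mul_sq Finset.univ
      (fun i : Fin n => Real.sqrt (Real.sqrt (N i)))
      (fun i : Fin n => 1 / Real.sqrt (Real.sqrt (N i)))
    have e1 : ∑ i : Fin n, Real.sqrt (Real.sqrt (N i)) * (1 / Real.sqrt (Real.sqrt (N i))) = (n:ℝ) := by
      have h1 : ∀ i ∈ Finset.univ, Real.sqrt (Real.sqrt (N i)) * (1 / Real.sqrt (Real.sqrt (N i))) = 1 := by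
        intro i _
        have hne : Real.sqrt (Real.sqrt (N i)) ≠ 0 :=
          ne_of_gt (Real.sqrt_pos.mpr (hNiR i))
        field_simp
      rw [Finset.sum_congr rfl h1]
      simp
    have e2 : ∑ i : Fin n, (Real.sqrt (Real.sqrt (N i)))^2 = A := by
      apply Finset.sum_congr rfl
      intro i _
      exact Real.sq_sqrt (Real.sqrt_nonneg _)
    have e3 : ∑ i : Fin n, (1 / Real.sqrt (Real.sqrt (N i)))^2 = T := by
      apply Finset.sum_congr rfl
      intro i _
      rw [div_pow, one_pow, Real.sq_sqrt (Real.sqrt_nonneg _)]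
    rw [e1, e2, e3] at h2
    exact h2
  -- Cauchy–Schwarz 2 : A² ≤ n * S
  have cs2 : A^2 ≤ (n:ℝ) * S := by
    have h2 := Finset.sum_mul_sq_le_sq_mul_sq Finset.univ
      (fun _ : Fin n => (1:ℝ))
      (fun i : Fin n => Real.sqrt (N i))
    have e1 : ∑ i : Fin n, (1:ℝ) * Real.sqrt (N i) = A := by simp [hAdef]
    have e2 : ∑ _i : Fin n, (1:ℝ)^2 = (n:ℝ) := by simp
    have e3 : ∑ i : Fin n, (Real.sqrt (N i))^2 = (S:ℝ) := by
      rw [hSdef]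
      push_cast
      apply Finset.sum_congr rfl
      intro i _
      exact Real.sq_sqrt (by positivity)
    rw [e1, e2, e3] at h2
    exact h2
  -- hence A ≤ √n * √S
  have hA_le : A ≤ Real.sqrt n * Real.sqrt S := by
    nlinarith [Real.sq_sqrt hnR.le, Real.sq_sqrt hSR.le, mul_pos hsqn hsqS]
  -- key: T * √S ≥ n * √n
  have hT_key : (n:ℝ) * Real.sqrt n ≤ T * Real.sqrt S := by
    have hn_eq : (n:ℝ) = Real.sqrt n * Real.sqrt n := (Real.mul_self_sqrt hnR.le).symm
    have h3 : (n:ℝ)^2 ≤ (Real.sqrt n * Real.sqrt S) * T :=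
      le_trans cs1 (mul_le_mul_of_nonneg_right hA_le hT0)
    nlinarith [hsqn, hsqS]
  -- rewrite LHS
  have hL : ∑ i, (c / Real.sqrt (N i)) / (n : ℝ) = c * T / n := by
    rw [← Finset.sum_div, hTdef, Finset.mul_sum]
    congr 1
    apply Finset.sum_congr rfl
    intro i _
    rw [mul_one_div]
  rw [hL]
  have step1 : c * Real.sqrt n / Real.sqrt S ≤ c * T / (n:ℝ) := by
    rw [div_le_div_iff₀ hsqS hnR]
    nlinarith [hT_key, hc.le]
  have step2 : (c / Real.sqrt S) / γ < c * Real.sqrt n / Real.sqrt S := by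
    rw [div_div, div_lt_div_iff₀ (by positivity) hsqS]
    have h1 : 1 < Real.sqrt n * γ := (div_lt_iff₀ hγ0).mp hn
    nlinarith [mul_pos hc hsqS, h1]
  calc (c / Real.sqrt (S:ℝ)) / γ < c * Real.sqrt n / Real.sqrt S := step2
    _ ≤ c * T / n := step1
end

section
/- Let S and A be finite sets, Q, Q̂ : S × A → ℝ, and π, π_b : S → probability distributions on A. Suppose (i) |Q(s,a) − Q̂(s,a)| ≤ e(s,a)·G for all (s,a), where e : S × A → ℝ≥0 and G ≥ 0; (ii) Σ_a e(s,a)|π(a|s) − π_b(a|s)| ≤ ε for all s; and (iii) Σ_a Q̂(s,a)π(a|s) ≥ Σ_a Q̂(s,a)π_b(a|s) for all s. Then for every s, Σ_a Q(s,a)(π(a|s) − π_b(a|s)) ≥ −εG. -/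
theorem pointwise_safety_core (S A : Type*) [Fintype S] [Fintype A]
    (Q Qhat : S → A → ℝ) (π πb : S → A → ℝ)
    (hπ0 : ∀ s a, 0 ≤ π s a) (hπ1 : ∀ s, ∑ a, π s a = 1)
    (hπb0 : ∀ s a, 0 ≤ πb s a) (hπb1 : ∀ s, ∑ a, πb s a = 1)
    (e : S → A → ℝ) (he : ∀ s a, 0 ≤ e s a) (G : ℝ) (hG : 0 ≤ G)
    (hQ : ∀ s a, |Q s a - Qhat s a| ≤ e s a * G)
    (ε : ℝ) (hcon : ∀ s, ∑ a, e s a * |π s a - πb s a| ≤ ε)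
    (hadv : ∀ s, ∑ a, Qhat s a * π s a ≥ ∑ a, Qhat s a * πb s a) :
    ∀ s, ∑ a, Q s a * (π s a - πb s a) ≥ -(ε * G) := by
  intro s
  have key : ∑ a, Q s a * (π s a - πb s a)
      = ∑ a, (Q s a - Qhat s a) * (π s a - πb s a)
        + (∑ a, Qhat s a * π s a - ∑ a, Qhat s a * πb s a) := by
    rw [← Finset.sum_sub_distrib]
    rw [← Finset.sum_add_distrib]
    congr 1; ext a; ring
  rw [key]
  have h1 : ∑ a, (Q s a - Qhat s a) * (π s a - πb s a) ≥ -(ε * G) := by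
    have hb : ∀ a : A, -(e s a * |π s a - πb s a| * G)
        ≤ (Q s a - Qhat s a) * (π s a - πb s a) := by
      intro a
      have := abs_mul (Q s a - Qhat s a) (π s a - πb s a)
      have habs : |(Q s a - Qhat s a) * (π s a - πb s a)|
          ≤ e s a * |π s a - πb s a| * G := by
        rw [abs_mul]
        calc |Q s a - Qhat s a| * |π s a - πb s a|
            ≤ (e s a * G) * |π s a - πb s a| := by
              exact mul_le_mul_of_nonneg_right (hQ s a) (abs_nonneg _)
          _ = e s a * |π s a - πb s a| * G := by ring
      linarith [neg_abs_le ((Q s a - Qhat s a) * (π s a - πb s a))]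
    calc ∑ a, (Q s a - Qhat s a) * (π s a - πb s a)
        ≥ ∑ a, -(e s a * |π s a - πb s a| * G) := Finset.sum_le_sum (fun a _ => hb a)
      _ = -((∑ a, e s a * |π s a - πb s a|) * G) := by
          simp [Finset.sum_neg_distrib, ← Finset.sum_mul]
      _ ≥ -(ε * G) := by
          have := mul_le_mul_of_nonneg_right (hcon s) hG
          linarith
  have h2 := hadv s
  linarith
end

section
/- Let S be a finite set (states), A a finite set (actions), and let π, π_b be stochastic matrices in ℝ^{|S||A| × |S|} encoding policies (π_{kj} = π(k|j) for actions k belonging to state j, zero otherwise). Let Q ∈ ℝ^{|S||A|} and suppose the Bellman-consistency relations V^{π_1} = Q^{π_1} π_1 (applied column-wise), Q^{π} = R + γ P V^{π} for both π_1 and π_2, and d^{π_1} = (I − γ π_1ᵀ Pᵀ)^{-1} viewed appropriately. Then V^{π_1} − V^{π_2} = Q^{π_2}(π_1 − π_2) d^{π_1}. -/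
open Matrix

lemma vecMul_smul_right {n m : Type*} [Fintype n] (M : Matrix n m ℝ) (a : ℝ) (v : n → ℝ) :
    Matrix.vecMul v (a • M) = a • Matrix.vecMul v M := by
  ext j
  simp [Matrix.vecMul, dotProduct, Finset.mul_sum]
  ring_nf
  exact Finset.sum_congr rfl fun i _ => by ring

theorem performance_difference (S A : Type*) [Fintype S] [Fintype A] [DecidableEq S]
    (γ : ℝ) (hγ0 : 0 ≤ γ) (hγ1 : γ < 1)
    (P : Matrix S (S × A) ℝ) (R : S × A → ℝ)
    (π₁ π₂ : Matrix (S × A) S ℝ)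
    (Q₁ Q₂ : S × A → ℝ)
    (hQ₁ : Q₁ = R + γ • Matrix.vecMul (Matrix.vecMul Q₁ π₁) P)
    (hQ₂ : Q₂ = R + γ • Matrix.vecMul (Matrix.vecMul Q₂ π₂) P)
    (d : Matrix S S ℝ)
    (hd : (1 - γ • (P * π₁)) * d = 1) :
    Matrix.vecMul Q₁ π₁ - Matrix.vecMul Q₂ π₂ =
      Matrix.vecMul Q₂ ((π₁ - π₂) * d) := by
  set V₁ := Matrix.vecMul Q₁ π₁ with hV₁
  set V₂ := Matrix.vecMul Q₂ π₂ with hV₂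
  have h1 : V₁ = Matrix.vecMul R π₁ + γ • Matrix.vecMul V₁ (P * π₁) := by
    conv_lhs => rw [hV₁, hQ₁]
    rw [Matrix.add_vecMul, Matrix.smul_vecMul, Matrix.vecMul_vecMul]
  have h2 : Matrix.vecMul Q₂ π₁ = Matrix.vecMul R π₁ + γ • Matrix.vecMul V₂ (P * π₁) := by
    conv_lhs => rw [hQ₂]
    rw [Matrix.add_vecMul, Matrix.smul_vecMul, Matrix.vecMul_vecMul]
  have key : Matrix.vecMul (V₁ - V₂) (1 - γ • (P * π₁)) = Matrix.vecMul Q₂ (π₁ - π₂) := by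
    rw [Matrix.vecMul_sub, Matrix.vecMul_sub, Matrix.vecMul_one,
      vecMul_smul_right, Matrix.sub_vecMul, h2, ← hV₂]
    nth_rewrite 1 [h1]
    module
  calc V₁ - V₂ = Matrix.vecMul (V₁ - V₂) ((1 - γ • (P * π₁)) * d) := by
        rw [hd, Matrix.vecMul_one]
    _ = Matrix.vecMul (Matrix.vecMul (V₁ - V₂) (1 - γ • (P * π₁))) d := by
        rw [Matrix.vecMul_vecMul]
    _ = Matrix.vecMul (Matrix.vecMul Q₂ (π₁ - π₂)) d := by rw [key]
    _ = Matrix.vecMul Q₂ ((π₁ - π₂) * d) := by rw [Matrix.vecMul_vecMul]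
end
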